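/- arXiv:1412.0122 — 2 statements merged into one kernel-verified Lean document; each statement's English description precedes it below -/
import Mathlib

section
/- In Hₙ (n ≥ 6), the number of positive roots Y = Σ aᵢEᵢ with a₀ ≠ 0, a₁ ≠ 0 and a_{n-1} ≠ 0 is (n-2)(n-3)/2; counting both signs, the number of such roots is (n-2)(n-3). -/
/-!
Write `a_i = Y i` and `e_i = HStep Y i`. Completing squares along the chain gives
`-Q(Y) = 3a₀² - 2(a₀ - 1)a₃ + a₁(a₁ - 1) + a_{n-1}(a_{n-1} - 1) + ∑ e_i(e_i - 1)`,
and `x(x - 1) ≥ 0` for every integer `x`. An estimate on the first three chain steps rules out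
`a₀ ≥ 2`, so a positive root with `a₀, a₁, a_{n-1} ≠ 0` is exactly a vector with
`a₀ = a₁ = a_{n-1} = 1` and all `e_i ∈ {0, 1}` (and then `Q = -3`). Telescoping gives
`∑ e_i = 2`, so such a root is determined by its two marked edges, which may be any two of the
`n - 2` edges of the chain: there are `(n-2).choose 2` of them. The negative roots are their
negatives.
-/

open Finset

def HAdj (i j : ℕ) : Bool :=
  decide ((i = 0 ∧ j = 3) ∨ (j = 0 ∧ i = 3) ∨ (1 ≤ i ∧ i + 1 = j) ∨ (1 ≤ j ∧ j + 1 = i))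

def HM (i j : ℕ) : ℤ :=
  if i = j then (if i = 0 then -3 else -2) else if HAdj i j then 1 else 0

def HQ (n : ℕ) (Y : ℕ → ℤ) : ℤ :=
  ∑ i ∈ Finset.range n, ∑ j ∈ Finset.range n, Y i * HM i j * Y j

/-- The triple root system of `Hₙ`. -/
def HRoots (n : ℕ) : Set (ℕ → ℤ) :=
  {Y : ℕ → ℤ | (∀ i, n ≤ i → Y i = 0) ∧ Y ≠ 0 ∧
    ((∀ i, 0 ≤ Y i) ∨ (∀ i, Y i ≤ 0)) ∧ (HQ n Y = -2 ∨ HQ n Y = -3)}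

lemma HM_comm (i j : ℕ) : HM i j = HM j i := by
  unfold HM HAdj
  split_ifs <;> simp_all <;> omega

lemma HM_last {n i : ℕ} (hn : 4 ≤ n) (hi : i < n) : HM i n = if i = n - 1 then 1 else 0 := by
  unfold HM HAdj
  split_ifs <;> simp_all <;> omega

lemma HM_self_of_pos {i : ℕ} (hi : 0 < i) : HM i i = -2 := by
  simp [HM, hi.ne']

lemma HQ_succ {n : ℕ} (hn : 4 ≤ n) (Y : ℕ → ℤ) :
    HQ (n + 1) Y = HQ n Y + 2 * Y (n - 1) * Y n - 2 * Y n ^ 2 := by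
  have hcol : ∑ i ∈ range n, Y i * HM i n * Y n = Y (n - 1) * Y n := by
    rw [sum_eq_single (n - 1) (fun i hi hne => by simp [HM_last hn (mem_range.1 hi), hne])
      (fun h => absurd (mem_range.2 (by omega)) h), HM_last hn (by omega), if_pos rfl, mul_one]
  have hrow : ∑ j ∈ range n, Y n * HM n j * Y j = Y (n - 1) * Y n := by
    rw [← hcol]
    exact sum_congr rfl fun i _ => by rw [HM_comm]; ring
  simp only [HQ, sum_range_succ, sum_add_distrib, hcol, hrow, HM_self_of_pos (by omega : 0 < n)]
  ring

/-- Along `E₁ — E₂ — E₃` a positive root climbs by at most one per edge, and from `E₃` to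
`E_{n-1}` it descends by at most one; `HStep Y i ∈ {0, 1}` says exactly this for the edge
`(i, i + 1)`, and `HStep Y i = 1` marks a missing climb or a descent. -/
def HStep (Y : ℕ → ℤ) (i : ℕ) : ℤ := Y i - Y (i + 1) + if i ≤ 2 then 1 else 0

lemma neg_HQ_eq {n : ℕ} (hn : 4 ≤ n) (Y : ℕ → ℤ) :
    -HQ n Y = 3 * Y 0 ^ 2 - 2 * (Y 0 - 1) * Y 3 + Y 1 * (Y 1 - 1) + Y (n - 1) * (Y (n - 1) - 1)
      + ∑ i ∈ Ico 1 (n - 1), HStep Y i * (HStep Y i - 1) := by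
  induction n, hn using Nat.le_induction with
  | base =>
    simp [HQ, HStep, HM, HAdj, sum_range_succ, sum_Ico_succ_top]
    ring
  | succ n hn ih =>
    obtain ⟨m, rfl⟩ : ∃ m, n = m + 1 := ⟨n - 1, by omega⟩
    have hsucc := HQ_succ hn Y
    simp only [Nat.add_sub_cancel] at ih hsucc ⊢
    rw [sum_Ico_succ_top (by omega), HStep, if_neg (by omega)]
    linear_combination ih - hsucc

lemma Int.mul_sub_one_nonneg (x : ℤ) : 0 ≤ x * (x - 1) := by
  nlinarith [Int.le_self_sq x]

structure IsHChainRoot (n : ℕ) (Y : ℕ → ℤ) : Prop where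
  support : ∀ i, n ≤ i → Y i = 0
  apply_zero : Y 0 = 1
  apply_one : Y 1 = 1
  apply_last : Y (n - 1) = 1
  step_mem : ∀ i ∈ Ico 1 (n - 1), HStep Y i = 0 ∨ HStep Y i = 1

lemma HStep_one (Y : ℕ → ℤ) : HStep Y 1 = Y 1 - Y 2 + 1 := by simp [HStep]

lemma HStep_two (Y : ℕ → ℤ) : HStep Y 2 = Y 2 - Y 3 + 1 := by simp [HStep]

lemma sum_Ico_one_eq_add {M : Type*} [AddCommMonoid M] {n : ℕ} (hn : 4 ≤ n) (f : ℕ → M) :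
    ∑ i ∈ Ico 1 (n - 1), f i = f 1 + f 2 + ∑ i ∈ Ico 3 (n - 1), f i := by
  rw [sum_eq_sum_Ico_succ_bot (by omega), sum_eq_sum_Ico_succ_bot (by omega), ← add_assoc]

lemma apply_zero_le_one_of_neg_HQ_le {n : ℕ} (hn : 4 ≤ n) {Y : ℕ → ℤ} (hq : -HQ n Y ≤ 3) :
    Y 0 ≤ 1 := by
  have htail : 0 ≤ ∑ i ∈ Ico 3 (n - 1), HStep Y i * (HStep Y i - 1) :=
    sum_nonneg fun i _ => Int.mul_sub_one_nonneg _
  rw [neg_HQ_eq hn, sum_Ico_one_eq_add hn, HStep_one, HStep_two] at hq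
  -- with `k = Y 0 - 1`, `4 * (-HQ n Y - 3)` equals the three squares below plus `12 * k - 3`
  -- plus nonnegative terms
  nlinarith [Int.mul_sub_one_nonneg (Y (n - 1)), sq_nonneg (2 * Y 1 - 2 * Y 0 + 1),
    sq_nonneg (2 * Y 1 - 2 * Y 2 + 2 * Y 0 - 1), sq_nonneg (2 * Y 2 - 2 * Y 3 + 2 * Y 0 - 1)]

lemma IsHChainRoot.of_mem_HRoots {n : ℕ} (hn : 4 ≤ n) {Y : ℕ → ℤ} (hY : Y ∈ HRoots n)
    (hpos : ∀ i, 0 ≤ Y i) (h0 : Y 0 ≠ 0) (h1 : Y 1 ≠ 0) (hl : Y (n - 1) ≠ 0) :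
    IsHChainRoot n Y := by
  obtain ⟨hsupp, -, -, hq⟩ := hY
  have hq3 : -HQ n Y ≤ 3 := by omega
  have ha0 : Y 0 = 1 := by
    have := apply_zero_le_one_of_neg_HQ_le hn hq3
    have := hpos 0
    omega
  rw [neg_HQ_eq hn, ha0] at hq3
  have hsum := sum_nonneg fun i (_ : i ∈ Ico 1 (n - 1)) => Int.mul_sub_one_nonneg (HStep Y i)
  have ha1 := Int.mul_sub_one_nonneg (Y 1)
  have hal := Int.mul_sub_one_nonneg (Y (n - 1))
  have hsum0 : ∑ i ∈ Ico 1 (n - 1), HStep Y i * (HStep Y i - 1) = 0 := by linarith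
  have hzero_or_one {x : ℤ} (hx : x * (x - 1) = 0) : x = 0 ∨ x = 1 := by
    simpa [sub_eq_zero] using hx
  refine ⟨hsupp, ha0, ?_, ?_, fun i hi => hzero_or_one ?_⟩
  · exact (hzero_or_one (by linarith)).resolve_left h1
  · exact (hzero_or_one (by linarith)).resolve_left hl
  · exact (sum_eq_zero_iff_of_nonneg fun i _ => Int.mul_sub_one_nonneg _).1 hsum0 i hi

namespace IsHChainRoot

variable {n : ℕ} {Y : ℕ → ℤ}

lemma neg_HQ (hn : 4 ≤ n) (hY : IsHChainRoot n Y) : -HQ n Y = 3 := by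
  have hsum : ∑ i ∈ Ico 1 (n - 1), HStep Y i * (HStep Y i - 1) = 0 :=
    sum_eq_zero fun i hi => by rcases hY.step_mem i hi with h | h <;> simp [h]
  rw [neg_HQ_eq hn, hsum, hY.apply_zero, hY.apply_one, hY.apply_last]
  ring

lemma nonneg (hY : IsHChainRoot n Y) (i : ℕ) : 0 ≤ Y i := by
  rcases le_or_gt n i with hni | hni
  · rw [hY.support i hni]
  rcases lt_or_ge i 3 with hi | hi
  · interval_cases i
    · rw [hY.apply_zero]; norm_num
    · rw [hY.apply_one]; norm_num
    · have := hY.step_mem 1 (mem_Ico.2 ⟨le_rfl, by omega⟩)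
      rw [HStep_one, hY.apply_one] at this
      omega
  have htel := sum_Ico_sub Y (show i ≤ n - 1 by omega)
  have hdesc : ∑ j ∈ Ico i (n - 1), (Y (j + 1) - Y j) ≤ 0 := by
    refine sum_nonpos fun j hj => ?_
    have hj' : j ∈ Ico 1 (n - 1) := by simp only [mem_Ico] at hj ⊢; omega
    have := hY.step_mem j hj'
    simp only [HStep, if_neg (show ¬ j ≤ 2 by simp only [mem_Ico] at hj; omega)] at this
    omega
  have := hY.apply_last
  omega

end IsHChainRoot

lemma isHChainRoot_iff {n : ℕ} (hn : 4 ≤ n) {Y : ℕ → ℤ} :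
    IsHChainRoot n Y ↔ Y ∈ HRoots n ∧ (∀ i, 0 ≤ Y i) ∧ Y 0 ≠ 0 ∧ Y 1 ≠ 0 ∧ Y (n - 1) ≠ 0 := by
  refine ⟨fun hY => ?_, fun ⟨hY, hpos, h0, h1, hl⟩ => .of_mem_HRoots hn hY hpos h0 h1 hl⟩
  have h0 : Y 0 ≠ 0 := by simp [hY.apply_zero]
  refine ⟨⟨hY.support, fun h => h0 (by simp [h]), Or.inl hY.nonneg, ?_⟩, hY.nonneg, h0,
    by simp [hY.apply_one], by simp [hY.apply_last]⟩
  have := hY.neg_HQ hn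
  omega

def HRootOfMarks (n : ℕ) (S : Finset ℕ) (i : ℕ) : ℤ :=
  if i < n then 1 + ∑ j ∈ Ico 1 i, ((if j ≤ 2 then 1 else 0) - if j ∈ S then 1 else 0) else 0

def HMarks (n : ℕ) (Y : ℕ → ℤ) : Finset ℕ := {i ∈ Ico 1 (n - 1) | HStep Y i = 1}

section Count

variable {n : ℕ} {S : Finset ℕ} {Y : ℕ → ℤ}

lemma sum_Ico_one_ite_le_two (hn : 4 ≤ n) :
    ∑ j ∈ Ico 1 (n - 1), (if j ≤ 2 then (1 : ℤ) else 0) = 2 := by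
  rw [sum_Ico_one_eq_add hn, sum_eq_zero fun j hj => if_neg (by simp only [mem_Ico] at hj; omega)]
  norm_num

lemma sum_HStep (hn : 4 ≤ n) (Y : ℕ → ℤ) :
    ∑ i ∈ Ico 1 (n - 1), HStep Y i = Y 1 - Y (n - 1) + 2 := by
  have htel := sum_Ico_sub Y (show 1 ≤ n - 1 by omega)
  simp only [HStep, sum_add_distrib, sum_sub_distrib, sum_Ico_one_ite_le_two hn] at htel ⊢
  linarith

lemma HStep_HRootOfMarks {i : ℕ} (hi : i ∈ Ico 1 (n - 1)) :
    HStep (HRootOfMarks n S) i = if i ∈ S then 1 else 0 := by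
  rw [mem_Ico] at hi
  simp only [HStep, HRootOfMarks, if_pos (show i < n by omega), if_pos (show i + 1 < n by omega),
    sum_Ico_succ_top hi.1]
  ring

lemma isHChainRoot_HRootOfMarks (hn : 4 ≤ n) (hS : S ∈ powersetCard 2 (Ico 1 (n - 1))) :
    IsHChainRoot n (HRootOfMarks n S) := by
  obtain ⟨hsub, hcard⟩ := mem_powersetCard.1 hS
  refine ⟨fun i hi => if_neg (by omega), ?_, ?_, ?_, fun i hi => ?_⟩
  · rw [HRootOfMarks, if_pos (by omega)]; simp
  · rw [HRootOfMarks, if_pos (by omega)]; simp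
  · rw [HRootOfMarks, if_pos (by omega), sum_sub_distrib, sum_Ico_one_ite_le_two hn, sum_boole,
      filter_mem_eq_inter, inter_eq_right.2 hsub, hcard]
    norm_num
  · rw [HStep_HRootOfMarks hi]
    split_ifs <;> simp

lemma HMarks_HRootOfMarks (hS : S ⊆ Ico 1 (n - 1)) : HMarks n (HRootOfMarks n S) = S := by
  ext i
  simp only [HMarks, mem_filter]
  refine ⟨fun ⟨hi, h⟩ => ?_, fun hi => ⟨hS hi, by rw [HStep_HRootOfMarks (hS hi), if_pos hi]⟩⟩
  rw [HStep_HRootOfMarks hi] at h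
  by_contra hiS
  simp [hiS] at h

namespace IsHChainRoot

lemma HMarks_mem (hn : 4 ≤ n) (hY : IsHChainRoot n Y) :
    HMarks n Y ∈ powersetCard 2 (Ico 1 (n - 1)) := by
  refine mem_powersetCard.2 ⟨filter_subset _ _, ?_⟩
  have h : ∑ i ∈ Ico 1 (n - 1), HStep Y i = (HMarks n Y).card := by
    rw [HMarks, ← sum_boole]
    exact sum_congr rfl fun i hi => by rcases hY.step_mem i hi with h | h <;> simp [h]
  rw [sum_HStep hn, hY.apply_one, hY.apply_last] at h
  omega

lemma ext {Y' : ℕ → ℤ} (hY : IsHChainRoot n Y) (hY' : IsHChainRoot n Y')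
    (h : ∀ i ∈ Ico 1 (n - 1), HStep Y i = HStep Y' i) : Y = Y' := by
  funext i
  rcases le_or_gt n i with hni | hni
  · rw [hY.support i hni, hY'.support i hni]
  rcases Nat.eq_zero_or_pos i with rfl | hi
  · rw [hY.apply_zero, hY'.apply_zero]
  induction i, hi using Nat.le_induction with
  | base => rw [hY.apply_one, hY'.apply_one]
  | succ i hi ih =>
    have := h i (mem_Ico.2 ⟨hi, by omega⟩)
    simp only [HStep, ih (by omega)] at this
    linarith

lemma eq_HRootOfMarks (hn : 4 ≤ n) (hY : IsHChainRoot n Y) : Y = HRootOfMarks n (HMarks n Y) :=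
  hY.ext (isHChainRoot_HRootOfMarks hn (hY.HMarks_mem hn)) fun i hi => by
    simp only [HStep_HRootOfMarks hi, HMarks, mem_filter]
    rcases hY.step_mem i hi with h | h <;> simp [h, hi]

end IsHChainRoot

lemma setOf_isHChainRoot_eq_image (hn : 4 ≤ n) :
    {Y | IsHChainRoot n Y} = HRootOfMarks n '' ↑(powersetCard 2 (Ico 1 (n - 1))) := by
  ext Y
  refine ⟨fun hY => ⟨_, hY.HMarks_mem hn, (hY.eq_HRootOfMarks hn).symm⟩, ?_⟩
  rintro ⟨S, hS, rfl⟩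
  exact isHChainRoot_HRootOfMarks hn hS

lemma ncard_setOf_isHChainRoot (hn : 4 ≤ n) :
    {Y | IsHChainRoot n Y}.ncard = (n - 2).choose 2 := by
  have hinj : Set.InjOn (HRootOfMarks n) ↑(powersetCard 2 (Ico 1 (n - 1))) :=
    fun S hS T hT h => by
      rw [← HMarks_HRootOfMarks (mem_powersetCard.1 hS).1,
        ← HMarks_HRootOfMarks (mem_powersetCard.1 hT).1, h]
  rw [setOf_isHChainRoot_eq_image hn, hinj.ncard_image, Set.ncard_coe_finset, card_powersetCard,
    Nat.card_Ico, Nat.sub_sub]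

end Count

lemma HQ_neg (n : ℕ) (Y : ℕ → ℤ) : HQ n (-Y) = HQ n Y := by
  simp [HQ]

lemma neg_mem_HRoots {n : ℕ} {Y : ℕ → ℤ} (hY : Y ∈ HRoots n) : -Y ∈ HRoots n := by
  obtain ⟨hsupp, hne, hsign, hq⟩ := hY
  refine ⟨fun i hi => by simp [hsupp i hi], neg_ne_zero.2 hne, ?_, by rwa [HQ_neg]⟩
  rcases hsign with h | h
  · exact Or.inr fun i => by simp [h i]
  · exact Or.inl fun i => by simp [h i]

open Pointwise in
lemma setOf_mem_HRoots_eq_union_neg {n : ℕ} (hn : 4 ≤ n) :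
    {Y ∈ HRoots n | Y 0 ≠ 0 ∧ Y 1 ≠ 0 ∧ Y (n - 1) ≠ 0}
      = {Y | IsHChainRoot n Y} ∪ -{Y | IsHChainRoot n Y} := by
  ext Y
  simp only [Set.mem_union, Set.mem_neg, Set.mem_ofPred_eq, isHChainRoot_iff hn]
  constructor
  · rintro ⟨hY, h0, h1, hl⟩
    rcases hY.2.2.1 with hpos | hneg
    · exact Or.inl ⟨hY, hpos, h0, h1, hl⟩
    · exact Or.inr ⟨neg_mem_HRoots hY, fun i => by simp [hneg i], by simpa, by simpa, by simpa⟩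
  · rintro (⟨hY, -, h0, h1, hl⟩ | ⟨hY, -, h0, h1, hl⟩)
    · exact ⟨hY, h0, h1, hl⟩
    · exact ⟨by simpa using neg_mem_HRoots hY, by simpa using h0, by simpa using h1,
        by simpa using hl⟩

open Pointwise in
lemma ncard_setOf_mem_HRoots {n : ℕ} (hn : 4 ≤ n) :
    {Y ∈ HRoots n | Y 0 ≠ 0 ∧ Y 1 ≠ 0 ∧ Y (n - 1) ≠ 0}.ncard = 2 * (n - 2).choose 2 := by
  have hfin : {Y | IsHChainRoot n Y}.Finite := by
    rw [setOf_isHChainRoot_eq_image hn]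
    exact (finite_toSet _).image _
  have hdisj : Disjoint {Y | IsHChainRoot n Y} (-{Y | IsHChainRoot n Y}) :=
    Set.disjoint_left.2 fun Y hY hY' => by
      have := (Set.mem_neg.1 hY').apply_zero
      simp [hY.apply_zero] at this
  rw [setOf_mem_HRoots_eq_union_neg hn, Set.ncard_union_eq hdisj hfin hfin.neg, Set.ncard_neg,
    ncard_setOf_isHChainRoot hn, two_mul]

/-- In `Hₙ` (`n ≥ 6`) there are `(n-2)(n-3)/2` positive roots with
`a₀ ≠ 0`, `a₁ ≠ 0` and `a_{n-1} ≠ 0`, hence `(n-2)(n-3)` such roots counting both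
signs. -/
theorem stmt_14 (n : ℕ) (hn : 6 ≤ n) :
    {Y ∈ HRoots n | (∀ i, 0 ≤ Y i) ∧ Y 0 ≠ 0 ∧ Y 1 ≠ 0 ∧ Y (n - 1) ≠ 0}.ncard
      = (n - 2) * (n - 3) / 2 ∧
    {Y ∈ HRoots n | Y 0 ≠ 0 ∧ Y 1 ≠ 0 ∧ Y (n - 1) ≠ 0}.ncard
      = (n - 2) * (n - 3) := by
  have hn4 : 4 ≤ n := by omega
  have hchoose : (n - 2).choose 2 = (n - 2) * (n - 3) / 2 := by
    rw [Nat.choose_two_right, Nat.sub_sub]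
  have hpos : {Y ∈ HRoots n | (∀ i, 0 ≤ Y i) ∧ Y 0 ≠ 0 ∧ Y 1 ≠ 0 ∧ Y (n - 1) ≠ 0}
      = {Y | IsHChainRoot n Y} :=
    Set.ext fun Y => (isHChainRoot_iff hn4).symm
  refine ⟨by rw [hpos, ncard_setOf_isHChainRoot hn4, hchoose], ?_⟩
  rw [ncard_setOf_mem_HRoots hn4, hchoose, mul_comm,
    Nat.div_two_mul_two_of_even (by simpa [Nat.sub_sub] using Nat.even_mul_pred_self (n - 2))]
end

section
/- Let Γ be a rational triple tree (rational tree of multiplicity 3). Then any root Y in the triple root system R(Γ) satisfies -Z(Γ) ≤ Y ≤ Z(Γ) componentwise, where Z(Γ) is the Artin cycle of Γ; i.e., the Artin cycle is the highest root. -/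
open Finset

def treeM (n : ℕ) (G : SimpleGraph (Fin n)) [DecidableRel G.Adj] (w : Fin n → ℤ)
    (i j : Fin n) : ℤ :=
  if i = j then -w i else if G.Adj i j then 1 else 0

def quadForm (n : ℕ) (M : Fin n → Fin n → ℤ) (Y : Fin n → ℤ) : ℤ :=
  ∑ i, ∑ j, Y i * M i j * Y j

/-!
An effective divisor `Y` that does not lie below the Artin cycle `Z` splits as
`Y = (Y ⊓ Z) + B` with both parts nonzero and effective. Rationality gives every nonzero
effective divisor self-intersection `≤ -2`, and the cross term `(Y ⊓ Z)·B` is `≤ 0`: on the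
support of `B` the divisor `Y ⊓ Z` agrees with `Z`, elsewhere it is `≤ Z`, and off-diagonal
intersection numbers are `≥ 0`, so `(Y ⊓ Z)·Eⱼ ≤ Z·Eⱼ ≤ 0` there. Hence `Y·Y ≤ -4` and `Y` is
not a root. This needs `Z` to have full support, which holds because a vertex outside the
support adjacent to it would have `Z·Eᵥ > 0`.
-/

open Matrix

section VecMul

variable {ι : Type*} [Fintype ι] {M : Matrix ι ι ℤ}

theorem vecMul_apply_le_of_le_of_eq (hoff : ∀ i j, i ≠ j → 0 ≤ M i j) {X Z : ι → ℤ}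
    (hXZ : X ≤ Z) {j : ι} (hj : X j = Z j) : (X ᵥ* M) j ≤ (Z ᵥ* M) j := by
  refine Finset.sum_le_sum fun i _ => ?_
  rcases eq_or_ne i j with rfl | hij
  · rw [hj]
  · exact mul_le_mul_of_nonneg_right (hXZ i) (hoff i j hij)

theorem inf_vecMul_dotProduct_sub_inf_nonpos (hoff : ∀ i j, i ≠ j → 0 ≤ M i j)
    {Z : ι → ℤ} (hZM : Z ᵥ* M ≤ 0) (Y : ι → ℤ) :
    ((Y ⊓ Z) ᵥ* M) ⬝ᵥ (Y - Y ⊓ Z) ≤ 0 := by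
  refine Finset.sum_nonpos fun j _ => ?_
  rcases le_or_gt (Y j) (Z j) with h | h
  · simp [inf_of_le_left h]
  · have hj : (Y ⊓ Z) j = Z j := inf_of_le_right h.le
    refine mul_nonpos_of_nonpos_of_nonneg
      ((vecMul_apply_le_of_le_of_eq hoff inf_le_right hj).trans (hZM j)) ?_
    simp only [Pi.sub_apply, hj]
    omega

theorem pos_of_vecMul_nonpos {G : SimpleGraph ι} (hG : G.Connected)
    (hoff : ∀ i j, i ≠ j → 0 ≤ M i j) (hadj : ∀ i j, G.Adj i j → 0 < M i j)
    {Z : ι → ℤ} (hZ : 0 ≤ Z) (hZne : Z ≠ 0) (hZM : Z ᵥ* M ≤ 0) (i : ι) : 0 < Z i := by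
  by_contra hi
  obtain ⟨j, hj⟩ : ∃ j, 0 < Z j := by
    by_contra! h
    exact hZne (funext fun k => le_antisymm (h k) (hZ k))
  obtain ⟨d, -, hu, hv⟩ :=
    (hG.preconnected j i).some.exists_boundary_dart {x | 0 < Z x} hj hi
  have hv0 : Z d.snd = 0 := le_antisymm (not_lt.1 hv) (hZ _)
  have hterm : Z d.fst * M d.fst d.snd ≤ (Z ᵥ* M) d.snd := by
    refine Finset.single_le_sum (f := fun x => Z x * M x d.snd) (fun x _ => ?_) (mem_univ _)
    rcases eq_or_ne x d.snd with rfl | hx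
    · simp [hv0]
    · exact mul_nonneg (hZ x) (hoff x _ hx)
  have hZMv : (Z ᵥ* M) d.snd ≤ 0 := hZM d.snd
  nlinarith [mul_pos (show 0 < Z d.fst from hu) (hadj _ _ d.adj)]

end VecMul

section QuadForm

variable {n : ℕ} {M : Matrix (Fin n) (Fin n) ℤ}

theorem quadForm_eq_vecMul_dotProduct (Y : Fin n → ℤ) : quadForm n M Y = (Y ᵥ* M) ⬝ᵥ Y := by
  simp only [quadForm, dotProduct, vecMul, Finset.sum_mul]
  exact Finset.sum_comm

theorem quadForm_neg (Y : Fin n → ℤ) : quadForm n M (-Y) = quadForm n M Y := by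
  simp only [quadForm_eq_vecMul_dotProduct, neg_vecMul, neg_dotProduct, dotProduct_neg, neg_neg]

theorem quadForm_add (hM : M.IsSymm) (X Y : Fin n → ℤ) :
    quadForm n M (X + Y) = quadForm n M X + 2 * ((X ᵥ* M) ⬝ᵥ Y) + quadForm n M Y := by
  have hYX : (Y ᵥ* M) ⬝ᵥ X = (X ᵥ* M) ⬝ᵥ Y := by
    rw [dotProduct_comm, ← dotProduct_mulVec, ← vecMul_transpose, hM.eq]
  simp only [quadForm_eq_vecMul_dotProduct, add_vecMul, add_dotProduct, dotProduct_add, hYX]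
  ring

theorem quadForm_le_neg_two_of_rational {w : Fin n → ℤ} (hw : ∀ i, 2 ≤ w i)
    (hrat : ∀ Y : Fin n → ℤ, (∀ i, 0 ≤ Y i) → Y ≠ 0 →
      quadForm n M Y + (∑ i, Y i * (w i - 2)) + 2 ≤ 0)
    {Y : Fin n → ℤ} (hY : 0 ≤ Y) (hYne : Y ≠ 0) : quadForm n M Y ≤ -2 := by
  have hK : 0 ≤ ∑ i, Y i * (w i - 2) :=
    Finset.sum_nonneg fun i _ => mul_nonneg (hY i) (by linarith [hw i])
  linarith [hrat Y hY hYne]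

theorem quadForm_le_neg_four_of_not_le (hM : M.IsSymm) (hoff : ∀ i j, i ≠ j → 0 ≤ M i j)
    (hneg : ∀ X : Fin n → ℤ, 0 ≤ X → X ≠ 0 → quadForm n M X ≤ -2)
    {Z : Fin n → ℤ} (hZ : ∀ i, 0 < Z i) (hZM : Z ᵥ* M ≤ 0)
    {Y : Fin n → ℤ} (hY : 0 ≤ Y) (hYZ : ¬Y ≤ Z) : quadForm n M Y ≤ -4 := by
  obtain ⟨k, hk⟩ : ∃ k, Z k < Y k := by simpa [Pi.le_def] using hYZ
  set A := Y ⊓ Z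
  have hAk : A k = Z k := inf_of_le_right hk.le
  have hAne : A ≠ 0 := fun h => by
    have := congrFun h k
    simp only [hAk, Pi.zero_apply] at this
    linarith [hZ k]
  have hBne : Y - A ≠ 0 := fun h => by
    have := congrFun h k
    simp only [Pi.sub_apply, hAk, Pi.zero_apply] at this
    omega
  have hAnn : 0 ≤ A := le_inf hY fun i => (hZ i).le
  have hBnn : 0 ≤ Y - A := sub_nonneg.2 inf_le_left
  calc quadForm n M Y = quadForm n M (A + (Y - A)) := by rw [add_sub_cancel]
    _ = quadForm n M A + 2 * ((A ᵥ* M) ⬝ᵥ (Y - A)) + quadForm n M (Y - A) :=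
      quadForm_add hM _ _
    _ ≤ -4 := by
      linarith [hneg A hAnn hAne, hneg _ hBnn hBne,
        inf_vecMul_dotProduct_sub_inf_nonpos hoff hZM Y]

end QuadForm

section TreeM

variable {n : ℕ} {G : SimpleGraph (Fin n)} [DecidableRel G.Adj] {w : Fin n → ℤ}

theorem treeM_isSymm : Matrix.IsSymm (treeM n G w) := by
  refine IsSymm.ext fun i j => ?_
  simp only [treeM, eq_comm (a := j), G.adj_comm j i]
  split_ifs <;> simp_all

theorem treeM_nonneg_of_ne {i j : Fin n} (h : i ≠ j) : 0 ≤ treeM n G w i j := by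
  simp only [treeM, if_neg h]
  split_ifs <;> norm_num

theorem treeM_pos_of_adj {i j : Fin n} (h : G.Adj i j) : 0 < treeM n G w i j := by
  simp [treeM, G.ne_of_adj h, h]

end TreeM

theorem stmt_18_general (n : ℕ) (G : SimpleGraph (Fin n)) [DecidableRel G.Adj]
    (hG : G.IsTree)
    (w : Fin n → ℤ) (i₀ : Fin n) (hw0 : w i₀ = 3) (hw : ∀ i, i ≠ i₀ → w i = 2)
    (hrat : ∀ Y' : Fin n → ℤ, (∀ i, 0 ≤ Y' i) → Y' ≠ 0 →
      quadForm n (treeM n G w) Y' + (∑ i, Y' i * (w i - 2)) + 2 ≤ 0)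
    (Z : Fin n → ℤ) (hZeff : ∀ i, 0 ≤ Z i) (hZne : Z ≠ 0)
    (hZdot : ∀ i, (∑ j, Z j * treeM n G w j i) ≤ 0) :
    ∀ Y : Fin n → ℤ, ((∀ i, 0 ≤ Y i) ∨ (∀ i, Y i ≤ 0)) →
      (quadForm n (treeM n G w) Y = -2 ∨ quadForm n (treeM n G w) Y = -3) →
      ∀ i, -Z i ≤ Y i ∧ Y i ≤ Z i := by
  have hw2 : ∀ i, 2 ≤ w i := fun i => by
    rcases eq_or_ne i i₀ with rfl | hi
    · omega
    · exact (hw i hi).ge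
  have hZpos : ∀ i, 0 < Z i :=
    pos_of_vecMul_nonpos hG.connected (fun _ _ => treeM_nonneg_of_ne)
      (fun _ _ => treeM_pos_of_adj) hZeff hZne hZdot
  have hroot_le : ∀ Y : Fin n → ℤ, 0 ≤ Y → -3 ≤ quadForm n (treeM n G w) Y → Y ≤ Z :=
    fun Y hY hQ => by
      by_contra hYZ
      have := quadForm_le_neg_four_of_not_le (M := treeM n G w) treeM_isSymm
        (fun _ _ => treeM_nonneg_of_ne) (fun _ => quadForm_le_neg_two_of_rational hw2 hrat)
        hZpos hZdot hY hYZ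
      omega
  intro Y hsign hQ i
  have hQ3 : -3 ≤ quadForm n (treeM n G w) Y := by omega
  rcases hsign with hY | hY
  · exact ⟨by linarith [hZeff i, hY i], hroot_le Y hY hQ3 i⟩
  · have := hroot_le (-Y) (fun j => neg_nonneg.2 (hY j))
      (by rwa [quadForm_neg (M := treeM n G w)]) i
    exact ⟨by simpa [neg_le] using this, by linarith [hZeff i, hY i]⟩

/-- Let `Γ` be a rational triple tree: a tree with a unique vertex `i₀` of weight 3,
all other vertices of weight 2, negative definite intersection matrix, and
`pₐ(Y) ≤ 0` for every nonzero effective divisor.  Let `Z` be the Artin cycle: the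
minimal nonzero effective divisor with `(Z·Eᵢ) ≤ 0` for all `i`, with `Z·Z = -3`.
Then every root `Y ∈ R(Γ)` (an effective or anti-effective divisor with
`(Y·Y) ∈ {-2,-3}`) satisfies `-Z ≤ Y ≤ Z` componentwise. -/
theorem stmt_18 (n : ℕ) (G : SimpleGraph (Fin n)) [DecidableRel G.Adj]
    (hG : G.IsTree)
    (w : Fin n → ℤ) (i₀ : Fin n) (hw0 : w i₀ = 3) (hw : ∀ i, i ≠ i₀ → w i = 2)
    (hnegdef : ∀ x : Fin n → ℤ, x ≠ 0 → quadForm n (treeM n G w) x < 0)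
    (hrat : ∀ Y' : Fin n → ℤ, (∀ i, 0 ≤ Y' i) → Y' ≠ 0 →
      quadForm n (treeM n G w) Y' + (∑ i, Y' i * (w i - 2)) + 2 ≤ 0)
    (Z : Fin n → ℤ) (hZeff : ∀ i, 0 ≤ Z i) (hZne : Z ≠ 0)
    (hZdot : ∀ i, (∑ j, Z j * treeM n G w j i) ≤ 0)
    (hZmin : ∀ Z' : Fin n → ℤ, (∀ i, 0 ≤ Z' i) → Z' ≠ 0 →
      (∀ i, (∑ j, Z' j * treeM n G w j i) ≤ 0) → ∀ i, Z i ≤ Z' i)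
    (hZZ : quadForm n (treeM n G w) Z = -3) :
    ∀ Y : Fin n → ℤ, ((∀ i, 0 ≤ Y i) ∨ (∀ i, Y i ≤ 0)) →
      (quadForm n (treeM n G w) Y = -2 ∨ quadForm n (treeM n G w) Y = -3) →
      ∀ i, -Z i ≤ Y i ∧ Y i ≤ Z i :=
  stmt_18_general n G hG w i₀ hw0 hw hrat Z hZeff hZne hZdot
end
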